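/- arXiv:1505.03609 — 3 statements merged into one kernel-verified Lean document; each statement's English description precedes it below -/
import Mathlib

section
/- Let θ > 0, s ≥ 1, and for i = 1,…,n let y_i ∈ ℝ, u_i ∈ ℝ^s, and ω_i ≥ 0. Then for every ζ ∈ ℝ^s and every coordinate k, the second partial derivative of the exponential squared objective satisfies ∂²Q/∂ζ_k²(ζ) ≥ −(2/θ) Σ_{i=1}^n ω_i u_{ik}² exp(−r_i(ζ)²/θ); in particular the right-hand side is always non-positive. -/
/-!
Each summand of `Q` is `ω i * φ (y i - u i ⬝ᵥ ζ)` with `φ t = exp (-t² / θ)`, and the residual is affine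
in `ζ` with `∂ₖ` equal to `-u i k`. Hence `∂ₖ² Q = ∑ i, ω i * (u i k)² * φ'' (rᵢ)`, and
`φ'' t = (4 t² / θ² - 2 / θ) φ t ≥ -(2 / θ) φ t`.
-/

open Finset

/-- The exponential squared objective
`Q(ζ) = ∑ i, ω i * exp (-(y i - u iᵀ ζ)² / θ)`. -/
noncomputable def expSqObj (θ : ℝ) {n s : ℕ} (y : Fin n → ℝ) (u : Fin n → Fin s → ℝ)
    (ω : Fin n → ℝ) (ζ : Fin s → ℝ) : ℝ :=
  ∑ i, ω i * Real.exp (-(y i - ∑ k, u i k * ζ k) ^ 2 / θ)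

section

variable {E ι : Type*} [NormedAddCommGroup E] [NormedSpace ℝ E] [Fintype ι] {ψ ψ' ψ'' : ℝ → ℝ}

theorem hasFDerivAt_sum_mul_comp_sub (hψ : ∀ t, HasDerivAt ψ (ψ' t) t) (a c : ι → ℝ)
    (L : ι → E →L[ℝ] ℝ) (z : E) :
    HasFDerivAt (fun z => ∑ i, a i * ψ (c i - L i z))
      (∑ i, (a i * ψ' (c i - L i z)) • -L i) z := by
  refine HasFDerivAt.fun_sum fun i _ => ?_
  have hres : HasFDerivAt (fun z => c i - L i z) (-L i) z := by
    simpa using (L i).hasFDerivAt.const_sub (c i)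
  simpa [mul_smul] using ((hψ _).comp_hasFDerivAt z hres).const_mul (a i)

theorem fderiv_sum_mul_comp_sub_apply (hψ : ∀ t, HasDerivAt ψ (ψ' t) t) (a c : ι → ℝ)
    (L : ι → E →L[ℝ] ℝ) (v : E) :
    (fun z => fderiv ℝ (fun z => ∑ i, a i * ψ (c i - L i z)) z v) =
      fun z => ∑ i, -(a i * L i v) * ψ' (c i - L i z) := by
  funext z
  rw [(hasFDerivAt_sum_mul_comp_sub hψ a c L z).fderiv]
  simp only [_root_.sum_apply, smul_apply, neg_apply, smul_eq_mul]
  exact sum_congr rfl fun i _ => by ring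

theorem fderiv_fderiv_sum_mul_comp_sub_apply (hψ : ∀ t, HasDerivAt ψ (ψ' t) t)
    (hψ' : ∀ t, HasDerivAt ψ' (ψ'' t) t) (a c : ι → ℝ) (L : ι → E →L[ℝ] ℝ) (v ζ : E) :
    fderiv ℝ (fun z => fderiv ℝ (fun z => ∑ i, a i * ψ (c i - L i z)) z v) ζ v =
      ∑ i, a i * L i v ^ 2 * ψ'' (c i - L i ζ) := by
  rw [fderiv_sum_mul_comp_sub_apply hψ, congrFun (fderiv_sum_mul_comp_sub_apply hψ' _ c L v) ζ]
  exact sum_congr rfl fun i _ => by ring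

end

namespace Real

theorem hasDerivAt_exp_neg_sq_div (θ t : ℝ) :
    HasDerivAt (fun t => exp (-t ^ 2 / θ)) (-2 * t / θ * exp (-t ^ 2 / θ)) t := by
  have h : HasDerivAt (fun t => -t ^ 2 / θ) (-(2 * t) / θ) t := by
    simpa using ((hasDerivAt_pow 2 t).neg.div_const θ)
  convert h.exp using 1
  ring

theorem hasDerivAt_mul_exp_neg_sq_div (θ t : ℝ) :
    HasDerivAt (fun t => -2 * t / θ * exp (-t ^ 2 / θ))
      ((4 * t ^ 2 / θ ^ 2 - 2 / θ) * exp (-t ^ 2 / θ)) t := by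
  have h : HasDerivAt (fun t => -2 * t / θ) (-2 / θ) t := by
    simpa using ((hasDerivAt_id t).const_mul (-2)).div_const θ
  exact (h.mul (hasDerivAt_exp_neg_sq_div θ t)).congr_deriv (by ring)

theorem neg_two_div_mul_exp_le (θ t : ℝ) :
    -(2 / θ) * exp (-t ^ 2 / θ) ≤ (4 * t ^ 2 / θ ^ 2 - 2 / θ) * exp (-t ^ 2 / θ) := by
  gcongr
  linarith [show 0 ≤ 4 * t ^ 2 / θ ^ 2 by positivity]

end Real

open Real in
theorem exp_sq_second_partial_lower_bound_general
    (θ : ℝ) (hθ : 0 < θ) (n s : ℕ)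
    (y : Fin n → ℝ) (u : Fin n → Fin s → ℝ) (ω : Fin n → ℝ) (hω : ∀ i, 0 ≤ ω i) :
    ∀ (ζ : Fin s → ℝ) (k : Fin s),
      (fderiv ℝ (fun z => fderiv ℝ (expSqObj θ y u ω) z (Pi.single k 1)) ζ (Pi.single k 1) ≥
        -(2 / θ) * ∑ i, ω i * (u i k) ^ 2 *
          Real.exp (-(y i - ∑ m, u i m * ζ m) ^ 2 / θ)) ∧
      -(2 / θ) * (∑ i, ω i * (u i k) ^ 2 *
          Real.exp (-(y i - ∑ m, u i m * ζ m) ^ 2 / θ)) ≤ 0 := by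
  intro ζ k
  let L i : (Fin s → ℝ) →L[ℝ] ℝ := LinearMap.toContinuousLinearMap (dotProductBilin ℝ ℝ (u i))
  have hQ : expSqObj θ y u ω = fun z => ∑ i, ω i * exp (-(y i - L i z) ^ 2 / θ) := rfl
  have hL : ∀ i, L i (Pi.single k 1) = u i k := by simp [L]
  have hterm : ∀ i, 0 ≤ ω i * u i k ^ 2 := fun i => mul_nonneg (hω i) (sq_nonneg _)
  refine ⟨?_, ?_⟩
  · rw [hQ, fderiv_fderiv_sum_mul_comp_sub_apply (hasDerivAt_exp_neg_sq_div θ)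
      (hasDerivAt_mul_exp_neg_sq_div θ), ge_iff_le, mul_sum]
    refine sum_le_sum fun i _ => ?_
    rw [hL, mul_left_comm (-(2 / θ))]
    exact mul_le_mul_of_nonneg_left (neg_two_div_mul_exp_le θ _) (hterm i)
  · refine mul_nonpos_of_nonpos_of_nonneg (neg_nonpos.mpr (by positivity)) ?_
    exact sum_nonneg fun i _ => mul_nonneg (hterm i) (exp_nonneg _)

theorem exp_sq_second_partial_lower_bound
    (θ : ℝ) (hθ : 0 < θ) (n s : ℕ) (hs : 1 ≤ s)
    (y : Fin n → ℝ) (u : Fin n → Fin s → ℝ) (ω : Fin n → ℝ) (hω : ∀ i, 0 ≤ ω i) :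
    ∀ (ζ : Fin s → ℝ) (k : Fin s),
      (fderiv ℝ (fun z => fderiv ℝ (expSqObj θ y u ω) z (Pi.single k 1)) ζ (Pi.single k 1) ≥
        -(2 / θ) * ∑ i, ω i * (u i k) ^ 2 *
          Real.exp (-(y i - ∑ m, u i m * ζ m) ^ 2 / θ)) ∧
      -(2 / θ) * (∑ i, ω i * (u i k) ^ 2 *
          Real.exp (-(y i - ∑ m, u i m * ζ m) ^ 2 / θ)) ≤ 0 :=
  exp_sq_second_partial_lower_bound_general θ hθ n s y u ω hω
end

section
/- Let θ > 0, s ≥ 1, and for i = 1,…,n let y_i ∈ ℝ, u_i ∈ ℝ^s, and ω_i ≥ 0, and let Q be the exponential squared objective. Then for all ζ, ζ⁰ ∈ ℝ^s, Q(ζ) ≥ Q(ζ⁰) + ∇Q(ζ⁰)ᵀ(ζ − ζ⁰) − (1/θ) Σ_{i=1}^n ω_i (u_iᵀ(ζ − ζ⁰))². -/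
open Finset

/-! Write `g r = exp (-r² / θ)` and `d = u iᵀ (ζ - ζ₀)`, so that the `i`-th residual moves from `r`
to `r - d`. Since `-(r - d)² = -r² + (2 r d - d²)`, the bound `exp x ≥ 1 + x` gives
`g (r - d) ≥ g r · (1 + (2 r d - d²) / θ)`, and `g r ≤ 1` weakens `- g r · d² / θ` to `- d² / θ`.
What remains, `g r · 2 r d / θ`, is the `i`-th summand of `∇Q(ζ₀)ᵀ (ζ - ζ₀)`; weight by `ω i ≥ 0`
and sum. -/

open Real

lemma exp_neg_sq_div_add_tangent_sub_le {θ : ℝ} (hθ : 0 ≤ θ) (r d : ℝ) :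
    exp (-r ^ 2 / θ) + exp (-r ^ 2 / θ) * (2 * r / θ) * d - d ^ 2 / θ ≤ exp (-(r - d) ^ 2 / θ) := by
  set g := exp (-r ^ 2 / θ)
  have hg_le_one : g ≤ 1 := exp_le_one_iff.mpr (div_nonpos_of_nonpos_of_nonneg (by nlinarith) hθ)
  have hg_mul_le : g * (d ^ 2 / θ) ≤ d ^ 2 / θ := mul_le_of_le_one_left (by positivity) hg_le_one
  calc g + g * (2 * r / θ) * d - d ^ 2 / θ
      ≤ g * ((2 * r * d - d ^ 2) / θ + 1) := by
        have : g * ((2 * r * d - d ^ 2) / θ + 1) = g + g * (2 * r / θ) * d - g * (d ^ 2 / θ) := by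
          ring
        linarith
    _ ≤ g * exp ((2 * r * d - d ^ 2) / θ) :=
        mul_le_mul_of_nonneg_left (add_one_le_exp _) (exp_pos _).le
    _ = exp (-(r - d) ^ 2 / θ) := by
        rw [← exp_add]
        ring_nf

lemma hasDerivAt_exp_neg_sq_div_sub (θ c t : ℝ) :
    HasDerivAt (fun t => exp (-(c - t) ^ 2 / θ)) (exp (-(c - t) ^ 2 / θ) * (2 * (c - t) / θ)) t := by
  convert ((((hasDerivAt_id' t).const_sub c).fun_pow 2).fun_neg.div_const θ).exp using 1
  ring

lemma hasFDerivAt_expSqObj (θ : ℝ) {n s : ℕ} (y : Fin n → ℝ) (u : Fin n → Fin s → ℝ)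
    (ω : Fin n → ℝ) (ζ₀ : Fin s → ℝ) :
    HasFDerivAt (expSqObj θ y u ω)
      (∑ i, (ω i * (exp (-(y i - ∑ k, u i k * ζ₀ k) ^ 2 / θ)
          * (2 * (y i - ∑ k, u i k * ζ₀ k) / θ)))
          • (∑ k, u i k • ContinuousLinearMap.proj k : (Fin s → ℝ) →L[ℝ] ℝ)) ζ₀ := by
  refine HasFDerivAt.fun_sum fun i _ => ?_
  have hrow : HasFDerivAt (fun ζ : Fin s → ℝ => ∑ k, u i k * ζ k)
      (∑ k, u i k • ContinuousLinearMap.proj k) ζ₀ :=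
    HasFDerivAt.fun_sum fun k _ => (hasFDerivAt_apply (𝕜 := ℝ) k ζ₀).const_mul (u i k)
  exact ((hasDerivAt_exp_neg_sq_div_sub θ (y i) _).const_mul (ω i)).comp_hasFDerivAt ζ₀ hrow

lemma fderiv_expSqObj_apply (θ : ℝ) {n s : ℕ} (y : Fin n → ℝ) (u : Fin n → Fin s → ℝ)
    (ω : Fin n → ℝ) (ζ₀ v : Fin s → ℝ) :
    fderiv ℝ (expSqObj θ y u ω) ζ₀ v
      = ∑ i, ω i * (exp (-(y i - ∑ k, u i k * ζ₀ k) ^ 2 / θ)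
          * (2 * (y i - ∑ k, u i k * ζ₀ k) / θ)) * ∑ k, u i k * v k := by
  simp [(hasFDerivAt_expSqObj θ y u ω ζ₀).fderiv, _root_.sum_apply]

theorem exp_sq_objective_minorization_general
    (θ : ℝ) (hθ : 0 < θ) (n s : ℕ)
    (y : Fin n → ℝ) (u : Fin n → Fin s → ℝ) (ω : Fin n → ℝ) (hω : ∀ i, 0 ≤ ω i) :
    ∀ ζ ζ₀ : Fin s → ℝ,
      expSqObj θ y u ω ζ ≥
        expSqObj θ y u ω ζ₀ + fderiv ℝ (expSqObj θ y u ω) ζ₀ (ζ - ζ₀)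
          - (1 / θ) * ∑ i, ω i * (∑ k, u i k * (ζ k - ζ₀ k)) ^ 2 := by
  intro ζ ζ₀
  rw [fderiv_expSqObj_apply, expSqObj, expSqObj, ge_iff_le, mul_sum, ← sum_add_distrib,
    ← sum_sub_distrib]
  refine sum_le_sum fun i _ => ?_
  set r := y i - ∑ k, u i k * ζ₀ k
  set d := ∑ k, u i k * (ζ k - ζ₀ k)
  have hresidual : y i - ∑ k, u i k * ζ k = r - d := by
    simp only [r, d, mul_sub, sum_sub_distrib]
    ring
  have h := mul_le_mul_of_nonneg_left (exp_neg_sq_div_add_tangent_sub_le hθ.le r d) (hω i)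
  rw [hresidual]
  linear_combination h

theorem exp_sq_objective_minorization
    (θ : ℝ) (hθ : 0 < θ) (n s : ℕ) (hs : 1 ≤ s)
    (y : Fin n → ℝ) (u : Fin n → Fin s → ℝ) (ω : Fin n → ℝ) (hω : ∀ i, 0 ≤ ω i) :
    ∀ ζ ζ₀ : Fin s → ℝ,
      expSqObj θ y u ω ζ ≥
        expSqObj θ y u ω ζ₀ + fderiv ℝ (expSqObj θ y u ω) ζ₀ (ζ - ζ₀)
          - (1 / θ) * ∑ i, ω i * (∑ k, u i k * (ζ k - ζ₀ k)) ^ 2 :=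
  exp_sq_objective_minorization_general θ hθ n s y u ω hω
end

section
/- Let θ > 0, λ > 0, s ≥ 1, data y_i ∈ ℝ, u_i ∈ ℝ^s, ω_i ≥ 0 for i = 1,…,n, and let Q be the exponential squared objective and R(ζ) = Q(ζ) − λ Σ_{k=1}^s |ζ_k|. Let ζ^M ∈ ℝ^s, ρ > 0, V ≥ 0, r > 0 satisfy 6·V·r < ρ and 12·λ·√s < ρ·r. Assume (i) ∇Q(ζ^M)ᵀ v ≤ ρ r²/6 for every v ∈ ℝ^s with ‖v‖₂ = r, and (ii) vᵀ ∇²Q(ξ) v ≤ (−2ρ/3 + V·r)·r² for every ξ in the closed ball B̄(ζ^M, r) and every v with ‖v‖₂ = r. Then R(ζ) < R(ζ^M) for every ζ with ‖ζ − ζ^M‖₂ = r, and consequently every maximizer of R over the closed ball B̄(ζ^M, r) lies within Euclidean distance strictly less than r of ζ^M. -/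
/-!
Write `ζ = ζᴹ + v` with `‖v‖₂ = r`. A second-order Taylor bound along the segment `t ↦ ζᴹ + t v`,
fed with (i) and (ii), gives `Q(ζ) - Q(ζᴹ) ≤ ρr²/6 + (-2ρ/3 + Vr) r²/2 < -ρr²/12`, using
`6Vr < ρ`. The penalty can gain at most `λ ‖v‖₁ ≤ λ √s r < ρr²/12`, so `R(ζ) < R(ζᴹ)` on the sphere;
a maximizer over the closed ball therefore cannot lie on its boundary.
-/

open Finset

/-- The ℓ1-penalized exponential squared objective
`R(ζ) = Q(ζ) - λ ∑ k, |ζ k|`. -/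
noncomputable def penExpSqObj (θ lam : ℝ) {n s : ℕ} (y : Fin n → ℝ)
    (u : Fin n → Fin s → ℝ) (ω : Fin n → ℝ) (ζ : Fin s → ℝ) : ℝ :=
  expSqObj θ y u ω ζ - lam * ∑ k, |ζ k|

open Set

theorem image_one_le_of_deriv_le_of_deriv2_le {g g' g'' : ℝ → ℝ} {A C : ℝ}
    (hg : ∀ t, HasDerivAt g (g' t) t) (hg' : ∀ t, HasDerivAt g' (g'' t) t)
    (hA : g' 0 ≤ A) (hC : ∀ t ∈ Icc (0 : ℝ) 1, g'' t ≤ C) :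
    g 1 ≤ g 0 + A + C / 2 := by
  have hlin : ∀ t, HasDerivAt (fun t => A + C * t) C t := fun t =>
    (((hasDerivAt_id t).const_mul C).const_add A).congr_deriv (mul_one C)
  have hquad : ∀ t, HasDerivAt (fun t => g 0 + A * t + C * t ^ 2 / 2) (A + C * t) t := fun t =>
    ((((hasDerivAt_id t).const_mul A).const_add (g 0)).fun_add
      (((hasDerivAt_pow 2 t).const_mul C).div_const 2)).congr_deriv (by norm_num; ring)
  have hg'_le : ∀ t ∈ Icc (0 : ℝ) 1, g' t ≤ A + C * t :=
    image_le_of_deriv_right_le_deriv_boundary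
      (fun t _ => (hg' t).continuousAt.continuousWithinAt)
      (fun t _ => (hg' t).hasDerivWithinAt) (by simpa using hA)
      (fun t _ => (hlin t).continuousAt.continuousWithinAt)
      (fun t _ => (hlin t).hasDerivWithinAt) (fun t ht => hC t (Ico_subset_Icc_self ht))
  simpa using image_le_of_deriv_right_le_deriv_boundary
    (fun t _ => (hg t).continuousAt.continuousWithinAt)
    (fun t _ => (hg t).hasDerivWithinAt) (by simp)
    (fun t _ => (hquad t).continuousAt.continuousWithinAt)
    (fun t _ => (hquad t).hasDerivWithinAt) (fun t ht => hg'_le t (Ico_subset_Icc_self ht))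
    (right_mem_Icc.2 zero_le_one)

theorem ContDiff.apply_add_le_of_fderiv_le_of_fderiv_fderiv_le {E : Type*} [NormedAddCommGroup E]
    [NormedSpace ℝ E] {f : E → ℝ} (hf : ContDiff ℝ 2 f) {a v : E} {A C : ℝ}
    (hA : fderiv ℝ f a v ≤ A)
    (hC : ∀ t ∈ Icc (0 : ℝ) 1, fderiv ℝ (fun z => fderiv ℝ f z v) (a + t • v) v ≤ C) :
    f (a + v) ≤ f a + A + C / 2 := by
  have hline : ∀ t : ℝ, HasDerivAt (fun t : ℝ => a + t • v) v t := fun t => by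
    simpa using ((hasDerivAt_id t).smul_const v).const_add a
  have hdf : Differentiable ℝ fun z => fderiv ℝ f z v :=
    ((hf.fderiv_right (m := 1) le_rfl).clm_apply contDiff_const).differentiable one_ne_zero
  simpa using image_one_le_of_deriv_le_of_deriv2_le
    (fun t => ((hf.differentiable two_ne_zero) _).hasFDerivAt.comp_hasDerivAt t (hline t))
    (fun t => (hdf _).hasFDerivAt.comp_hasDerivAt t (hline t))
    (by simpa using hA) hC

theorem contDiff_expSqObj (θ : ℝ) {n s : ℕ} (y : Fin n → ℝ) (u : Fin n → Fin s → ℝ)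
    (ω : Fin n → ℝ) : ContDiff ℝ 2 (expSqObj θ y u ω) := by
  unfold expSqObj
  fun_prop

theorem sqrt_sum_mul_sq {ι : Type*} (S : Finset ι) (t : ℝ) (v : ι → ℝ) :
    √(∑ k ∈ S, (t * v k) ^ 2) = |t| * √(∑ k ∈ S, v k ^ 2) := by
  simp_rw [mul_pow, ← mul_sum, Real.sqrt_mul (sq_nonneg t), Real.sqrt_sq_eq_abs]

theorem sum_abs_le_sqrt_card_mul_sqrt_sum_sq {ι : Type*} (S : Finset ι) (v : ι → ℝ) :
    ∑ k ∈ S, |v k| ≤ √(#S : ℝ) * √(∑ k ∈ S, v k ^ 2) := by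
  rw [← Real.sqrt_mul (Nat.cast_nonneg _)]
  refine (Real.le_sqrt (sum_nonneg fun k _ => abs_nonneg _)
    (mul_nonneg (Nat.cast_nonneg _) (sum_nonneg fun k _ => sq_nonneg _))).2 ?_
  simpa only [sq_abs] using sq_sum_le_card_mul_sum_sq (s := S) (f := fun k => |v k|)

theorem sum_abs_sub_sum_abs_le {ι : Type*} (S : Finset ι) (a b : ι → ℝ) :
    ∑ k ∈ S, |a k| - ∑ k ∈ S, |b k| ≤ ∑ k ∈ S, |a k - b k| := by
  rw [← sum_sub_distrib]
  exact sum_le_sum fun k _ => abs_sub_abs_le_abs_sub _ _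

theorem penalized_maximizer_localization_general
    (θ lam : ℝ) (hlam : 0 < lam) (n s : ℕ)
    (y : Fin n → ℝ) (u : Fin n → Fin s → ℝ) (ω : Fin n → ℝ)
    (ζM : Fin s → ℝ) (ρ V r : ℝ) (hr : 0 < r)
    (hVr : 6 * V * r < ρ) (hlams : 12 * lam * Real.sqrt s < ρ * r)
    (hgrad : ∀ v : Fin s → ℝ, Real.sqrt (∑ k, v k ^ 2) = r →
      fderiv ℝ (expSqObj θ y u ω) ζM v ≤ ρ * r ^ 2 / 6)
    (hhess : ∀ ξ : Fin s → ℝ, Real.sqrt (∑ k, (ξ k - ζM k) ^ 2) ≤ r →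
      ∀ v : Fin s → ℝ, Real.sqrt (∑ k, v k ^ 2) = r →
        fderiv ℝ (fun z => fderiv ℝ (expSqObj θ y u ω) z v) ξ v ≤
          (-(2 * ρ) / 3 + V * r) * r ^ 2) :
    (∀ ζ : Fin s → ℝ, Real.sqrt (∑ k, (ζ k - ζM k) ^ 2) = r →
      penExpSqObj θ lam y u ω ζ < penExpSqObj θ lam y u ω ζM) ∧
    (∀ ζhat : Fin s → ℝ, Real.sqrt (∑ k, (ζhat k - ζM k) ^ 2) ≤ r →
      (∀ ζ : Fin s → ℝ, Real.sqrt (∑ k, (ζ k - ζM k) ^ 2) ≤ r →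
        penExpSqObj θ lam y u ω ζ ≤ penExpSqObj θ lam y u ω ζhat) →
      Real.sqrt (∑ k, (ζhat k - ζM k) ^ 2) < r) := by
  have lt_on_sphere : ∀ ζ : Fin s → ℝ, Real.sqrt (∑ k, (ζ k - ζM k) ^ 2) = r →
      penExpSqObj θ lam y u ω ζ < penExpSqObj θ lam y u ω ζM := by
    intro ζ hζ
    have hseg : ∀ t ∈ Icc (0 : ℝ) 1, √(∑ k, ((ζM + t • (ζ - ζM)) k - ζM k) ^ 2) ≤ r :=
      fun t ht => by
        simpa [sqrt_sum_mul_sq, hζ, abs_of_nonneg ht.1] using mul_le_of_le_one_left hr.le ht.2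
    have hQ := (contDiff_expSqObj θ y u ω).apply_add_le_of_fderiv_le_of_fderiv_fderiv_le
      (hgrad (ζ - ζM) hζ) fun t ht => hhess _ (hseg t ht) (ζ - ζM) hζ
    rw [add_sub_cancel] at hQ
    have hpen : ∑ k, |ζM k| - ∑ k, |ζ k| ≤ √s * r := calc
      _ ≤ ∑ k, |ζ k - ζM k| := by
        simpa only [abs_sub_comm] using sum_abs_sub_sum_abs_le univ ζM ζ
      _ ≤ √s * r := by
        simpa [hζ] using sum_abs_le_sqrt_card_mul_sqrt_sum_sq univ fun k => ζ k - ζM k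
    unfold penExpSqObj
    nlinarith [mul_le_mul_of_nonneg_left hpen hlam.le, mul_lt_mul_of_pos_right hVr (pow_pos hr 2)]
  refine ⟨lt_on_sphere, fun ζhat hle hmax => hle.lt_of_ne fun heq => ?_⟩
  exact (lt_on_sphere ζhat heq).not_ge (hmax ζM (by simpa using hr.le))

theorem penalized_maximizer_localization
    (θ lam : ℝ) (hθ : 0 < θ) (hlam : 0 < lam) (n s : ℕ) (hs : 1 ≤ s)
    (y : Fin n → ℝ) (u : Fin n → Fin s → ℝ) (ω : Fin n → ℝ) (hω : ∀ i, 0 ≤ ω i)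
    (ζM : Fin s → ℝ) (ρ V r : ℝ) (hρ : 0 < ρ) (hV : 0 ≤ V) (hr : 0 < r)
    (hVr : 6 * V * r < ρ) (hlams : 12 * lam * Real.sqrt s < ρ * r)
    (hgrad : ∀ v : Fin s → ℝ, Real.sqrt (∑ k, v k ^ 2) = r →
      fderiv ℝ (expSqObj θ y u ω) ζM v ≤ ρ * r ^ 2 / 6)
    (hhess : ∀ ξ : Fin s → ℝ, Real.sqrt (∑ k, (ξ k - ζM k) ^ 2) ≤ r →
      ∀ v : Fin s → ℝ, Real.sqrt (∑ k, v k ^ 2) = r →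
        fderiv ℝ (fun z => fderiv ℝ (expSqObj θ y u ω) z v) ξ v ≤
          (-(2 * ρ) / 3 + V * r) * r ^ 2) :
    (∀ ζ : Fin s → ℝ, Real.sqrt (∑ k, (ζ k - ζM k) ^ 2) = r →
      penExpSqObj θ lam y u ω ζ < penExpSqObj θ lam y u ω ζM) ∧
    (∀ ζhat : Fin s → ℝ, Real.sqrt (∑ k, (ζhat k - ζM k) ^ 2) ≤ r →
      (∀ ζ : Fin s → ℝ, Real.sqrt (∑ k, (ζ k - ζM k) ^ 2) ≤ r →
        penExpSqObj θ lam y u ω ζ ≤ penExpSqObj θ lam y u ω ζhat) →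
      Real.sqrt (∑ k, (ζhat k - ζM k) ^ 2) < r) :=
  penalized_maximizer_localization_general θ lam hlam n s y u ω ζM ρ V r hr hVr hlams hgrad hhess
end
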